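/- arXiv:2211.04223 — 6 statements merged into one kernel-verified Lean document; each statement's English description precedes it below -/
import Mathlib

section
/- Let α be a partial action of a topological group G on a compact space X, given by open sets X_t ⊆ X and homeomorphisms α_t : X_{t⁻¹} → X_t, where the set {(t,x) : x ∈ X_{t⁻¹}} is open in G × X. Then there exists an open subgroup H of G such that X_t = X for all t ∈ H; i.e., the restriction of α to H is a global action. -/
/-- A continuous partial action of a topological group `G` on a topological space `X`:
open domains `dom t`, partial homeomorphisms `act t : dom t⁻¹ → dom t` (encoded as total
maps that restrict to bijections), openness of the graph set, joint continuity, `dom 1 = X`,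
`act 1 = id`, inverses, and the extension property `α_{st} ⊇ α_s ∘ α_t`. -/
structure TopPartialAction (G : Type*) [Group G] [TopologicalSpace G]
    (X : Type*) [TopologicalSpace X] where
  dom : G → Set X
  act : G → X → X
  dom_open : ∀ t : G, IsOpen (dom t)
  bijOn : ∀ t : G, Set.BijOn (act t) (dom t⁻¹) (dom t)
  graph_open : IsOpen {p : G × X | p.2 ∈ dom p.1⁻¹}
  act_cont : ContinuousOn (fun p : G × X => act p.1 p.2) {p : G × X | p.2 ∈ dom p.1⁻¹}
  dom_one : dom 1 = Set.univ
  act_one : ∀ x : X, act 1 x = x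
  inv_eq : ∀ t : G, ∀ x ∈ dom t⁻¹, act t⁻¹ (act t x) = x
  extend : ∀ s t : G, ∀ x ∈ dom t⁻¹, act t x ∈ dom s⁻¹ →
    x ∈ dom (s * t)⁻¹ ∧ act (s * t) x = act s (act t x)

/-!
The elements `t` with `X_t = X_{t⁻¹} = X` form a subgroup, by the extension axiom. Since
`X_1 = X` and the graph set `{(t, x) | x ∈ X_{t⁻¹}}` is open and contains `{1} × X`, compactness
of `X` (the tube lemma) yields a neighbourhood of `1` on which `X_{t⁻¹} = X`; intersecting it
with its inverse gives a neighbourhood of `1` inside the subgroup, which is therefore open.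
-/

open Set Filter Topology

namespace TopPartialAction

variable {G X : Type*} [Group G] [TopologicalSpace G] [TopologicalSpace X]
  (α : TopPartialAction G X)

theorem dom_mul_inv_eq_univ {s t : G} (hs : α.dom s⁻¹ = univ) (ht : α.dom t⁻¹ = univ) :
    α.dom (s * t)⁻¹ = univ :=
  eq_univ_of_forall fun x ↦ (α.extend s t x (ht ▸ mem_univ x) (hs ▸ mem_univ _)).1

def globalSubgroup : Subgroup G where
  carrier := {t | α.dom t = univ ∧ α.dom t⁻¹ = univ}
  one_mem' := by simp [α.dom_one]
  inv_mem' := fun ⟨h, h_inv⟩ ↦ ⟨h_inv, by rwa [inv_inv]⟩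
  mul_mem' := by
    rintro s t ⟨hs, hs_inv⟩ ⟨ht, ht_inv⟩
    refine ⟨?_, α.dom_mul_inv_eq_univ hs_inv ht_inv⟩
    simpa using α.dom_mul_inv_eq_univ (s := t⁻¹) (t := s⁻¹) (by rwa [inv_inv]) (by rwa [inv_inv])

theorem eventually_dom_inv_eq_univ [CompactSpace X] : ∀ᶠ t in 𝓝 (1 : G), α.dom t⁻¹ = univ := by
  have h : ∀ᶠ t in 𝓝 (1 : G), ∀ x ∈ (univ : Set X), x ∈ α.dom t⁻¹ :=
    isCompact_univ.eventually_forall_of_forall_eventually fun x _ ↦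
      α.graph_open.mem_nhds (by simp [α.dom_one])
  exact h.mono fun t ht ↦ eq_univ_of_forall fun x ↦ ht x (mem_univ x)

theorem isOpen_globalSubgroup [IsTopologicalGroup G] [CompactSpace X] :
    IsOpen (α.globalSubgroup : Set G) := by
  have h_inv : ∀ᶠ t in 𝓝 (1 : G), α.dom t⁻¹⁻¹ = univ :=
    (continuous_inv.tendsto' 1 1 inv_one).eventually α.eventually_dom_inv_eq_univ
  refine Subgroup.isOpen_of_mem_nhds _ (g := 1) ?_
  filter_upwards [α.eventually_dom_inv_eq_univ, h_inv] with t ht ht'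
  exact ⟨by rwa [inv_inv] at ht', ht⟩

end TopPartialAction

/-- A partial action of a topological group on a compact space restricts to a global
action on some open subgroup. -/
theorem exists_open_subgroup_restriction_global
    (G : Type*) [Group G] [TopologicalSpace G] [IsTopologicalGroup G]
    (X : Type*) [TopologicalSpace X] [CompactSpace X]
    (α : TopPartialAction G X) :
    ∃ H : Subgroup G, IsOpen (H : Set G) ∧ ∀ t ∈ H, α.dom t = Set.univ :=
  ⟨α.globalSubgroup, α.isOpen_globalSubgroup, fun _ ht ↦ ht.1⟩
end

section
/- Condition (3) in the definition of a partial action (that X_e = X and α_{st} extends α_s∘α_t for all s,t) is equivalent to the conjunction of: (3-1) α_e = id_X and α_{t⁻¹} = α_t⁻¹; (3-2) α_t(X_{t⁻¹} ∩ X_s) = X_t ∩ X_{ts}; (3-3) α_s∘α_t agrees with α_{st} on X_{t⁻¹} ∩ X_{t⁻¹s⁻¹}, mapping it bijectively onto X_s ∩ X_{st}. -/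
/-- A pre-partial action: subsets `dom t ⊆ X` and maps `act t` restricting to bijections
`dom t⁻¹ → dom t`. -/
structure PrePartialAction (G X : Type*) [Group G] where
  dom : G → Set X
  act : G → X → X
  bijOn : ∀ t : G, Set.BijOn (act t) (dom t⁻¹) (dom t)

/-- Condition (3) of the definition of a partial action (`X_e = X` and `α_{st}` extends
`α_s ∘ α_t`) is equivalent to the conjunction of (3-1), (3-2) and (3-3). -/
theorem cond_three_iff {G X : Type*} [Group G] (α : PrePartialAction G X) :
    (α.dom 1 = Set.univ ∧
      ∀ s t : G, ∀ x ∈ α.dom t⁻¹, α.act t x ∈ α.dom s⁻¹ →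
        x ∈ α.dom (s * t)⁻¹ ∧ α.act (s * t) x = α.act s (α.act t x))
    ↔
    ((α.dom 1 = Set.univ ∧ (∀ x : X, α.act 1 x = x) ∧
        ∀ t : G, ∀ x ∈ α.dom t⁻¹, α.act t⁻¹ (α.act t x) = x) ∧
      (∀ s t : G, α.act t '' (α.dom t⁻¹ ∩ α.dom s) = α.dom t ∩ α.dom (t * s)) ∧
      (∀ s t : G,
        Set.BijOn (fun x => α.act s (α.act t x))
          (α.dom t⁻¹ ∩ α.dom (t⁻¹ * s⁻¹)) (α.dom s ∩ α.dom (s * t)) ∧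
        ∀ x ∈ α.dom t⁻¹ ∩ α.dom (t⁻¹ * s⁻¹),
          α.act s (α.act t x) = α.act (s * t) x)) := by
  constructor
  · rintro ⟨h1, hB⟩
    -- act 1 = id
    have act1 : ∀ x : X, α.act 1 x = x := by
      intro x
      have hx : x ∈ α.dom (1 : G)⁻¹ := by rw [inv_one, h1]; trivial
      have hx' : α.act 1 x ∈ α.dom (1 : G)⁻¹ := by rw [inv_one, h1]; trivial
      have h := (hB 1 1 x hx hx').2
      rw [one_mul] at h
      exact ((α.bijOn (1 : G)).injOn hx hx' h).symm
    -- left inverse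
    have hinv : ∀ t : G, ∀ x ∈ α.dom t⁻¹, α.act t⁻¹ (α.act t x) = x := by
      intro t x hx
      have hx' : α.act t x ∈ α.dom (t⁻¹)⁻¹ := by
        rw [inv_inv]; exact (α.bijOn t).mapsTo hx
      have h := (hB t⁻¹ t x hx hx').2
      rw [inv_mul_cancel, act1] at h
      exact h.symm
    -- right inverse
    have hrinv : ∀ t : G, ∀ x ∈ α.dom t, α.act t (α.act t⁻¹ x) = x := by
      intro t x hx
      have := hinv t⁻¹ x (by rwa [inv_inv])
      rwa [inv_inv] at this
    -- (3-2)
    have h32 : ∀ s t : G, α.act t '' (α.dom t⁻¹ ∩ α.dom s) = α.dom t ∩ α.dom (t * s) := by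
      intro s t
      apply Set.Subset.antisymm
      · rintro z ⟨x, ⟨hx1, hx2⟩, rfl⟩
        refine ⟨(α.bijOn t).mapsTo hx1, ?_⟩
        have hy : α.act s⁻¹ x ∈ α.dom s⁻¹ := (α.bijOn s⁻¹).mapsTo (by rwa [inv_inv])
        have hxy : α.act s (α.act s⁻¹ x) = x := hrinv s x hx2
        have h := hB t s (α.act s⁻¹ x) hy (by rwa [hxy])
        have := (α.bijOn (t * s)).mapsTo h.1
        rwa [h.2, hxy] at this
      · rintro z ⟨hz1, hz2⟩
        have hx : α.act t⁻¹ z ∈ α.dom t⁻¹ := (α.bijOn t⁻¹).mapsTo (by rwa [inv_inv])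
        have hxz : α.act t (α.act t⁻¹ z) = z := hrinv t z hz1
        have hw : α.act (t * s)⁻¹ z ∈ α.dom (t * s)⁻¹ :=
          (α.bijOn (t * s)⁻¹).mapsTo (by rwa [inv_inv])
        have hwz : α.act (t * s) (α.act (t * s)⁻¹ z) = z := hrinv (t * s) z hz2
        have h := hB t⁻¹ (t * s) (α.act (t * s)⁻¹ z) hw
          (by rw [hwz, inv_inv]; exact hz1)
        rw [inv_mul_cancel_left] at h
        have hxs : α.act t⁻¹ z ∈ α.dom s := by
          have := (α.bijOn s).mapsTo h.1
          rwa [h.2, hwz] at this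
        exact ⟨α.act t⁻¹ z, ⟨hx, hxs⟩, hxz⟩
    refine ⟨⟨h1, act1, hinv⟩, h32, ?_⟩
    intro s t
    -- membership step: act t maps S1 into dom s⁻¹
    have himg : α.act t '' (α.dom t⁻¹ ∩ α.dom (t⁻¹ * s⁻¹)) = α.dom t ∩ α.dom s⁻¹ := by
      rw [h32 (t⁻¹ * s⁻¹) t, mul_inv_cancel_left]
    have hagree : ∀ x ∈ α.dom t⁻¹ ∩ α.dom (t⁻¹ * s⁻¹),
        α.act s (α.act t x) = α.act (s * t) x := by
      intro x hx
      have hmem : α.act t x ∈ α.dom s⁻¹ := by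
        have : α.act t x ∈ α.act t '' (α.dom t⁻¹ ∩ α.dom (t⁻¹ * s⁻¹)) := ⟨x, hx, rfl⟩
        rw [himg] at this
        exact this.2
      exact (hB s t x hx.1 hmem).2.symm
    refine ⟨?_, hagree⟩
    have hf : Set.BijOn (α.act t) (α.dom t⁻¹ ∩ α.dom (t⁻¹ * s⁻¹))
        (α.dom s⁻¹ ∩ α.dom t) := by
      refine ⟨?_, (α.bijOn t).injOn.mono Set.inter_subset_left, ?_⟩
      · intro x hx
        have : α.act t x ∈ α.dom t ∩ α.dom s⁻¹ := himg ▸ ⟨x, hx, rfl⟩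
        exact ⟨this.2, this.1⟩
      · intro z hz
        have : z ∈ α.act t '' (α.dom t⁻¹ ∩ α.dom (t⁻¹ * s⁻¹)) :=
          himg ▸ ⟨hz.2, hz.1⟩
        exact this
    have hg : Set.BijOn (α.act s) (α.dom s⁻¹ ∩ α.dom t) (α.dom s ∩ α.dom (s * t)) := by
      have himg' := h32 t s
      refine ⟨?_, (α.bijOn s).injOn.mono Set.inter_subset_left, ?_⟩
      · intro x hx
        exact himg' ▸ ⟨x, hx, rfl⟩
      · intro z hz
        rw [himg']
        exact hz
    exact hg.comp hf
  · rintro ⟨⟨h1, act1, hinv⟩, h32, h33⟩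
    refine ⟨h1, fun s t x hx hsx => ?_⟩
    have hmem : α.act t x ∈ α.dom t ∩ α.dom (t * (t⁻¹ * s⁻¹)) := by
      rw [mul_inv_cancel_left]
      exact ⟨(α.bijOn t).mapsTo hx, hsx⟩
    rw [← h32 (t⁻¹ * s⁻¹) t] at hmem
    obtain ⟨y, hy, hyx⟩ := hmem
    have hxy : x = y := (α.bijOn t).injOn hx hy.1 hyx.symm
    subst hxy
    refine ⟨by rw [mul_inv_rev]; exact hy.2, ((h33 s t).2 x hy).symm⟩
end

section
/- Let α be a partial action of G on X and suppose C ∼_α D (C and D are α-equi-decomposable). Then there exists a bijection φ : C → D such that for every subset A ⊆ C, A ∼_α φ(A). -/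
open scoped ENNReal

/-- A (set-theoretic) partial action of a group `G` on a set `X`. -/
structure SetPartialAction (G X : Type*) [Group G] where
  dom : G → Set X
  act : G → X → X
  bijOn : ∀ t : G, Set.BijOn (act t) (dom t⁻¹) (dom t)

/-- `C ∼_α D`: `C` and `D` are `α`-equi-decomposable. -/
def PartialEquidecomp {G X : Type*} [Group G] (α : SetPartialAction G X) (C D : Set X) : Prop :=
  ∃ (n : ℕ) (t : Fin n → G) (P : Fin n → Set X),
    0 < n ∧
    (∀ i, P i ⊆ α.dom (t i)⁻¹) ∧
    (Pairwise fun i j => Disjoint (P i) (P j)) ∧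
    (⋃ i, P i) = C ∧
    (Pairwise fun i j => Disjoint (α.act (t i) '' P i) (α.act (t j) '' P j)) ∧
    (⋃ i, α.act (t i) '' P i) = D

/-!
The bijection is the piecewise map `x ↦ α_{t_i} x` for `x ∈ C_i`; it is injective because the
images `α_{t_i}(C_i)` are disjoint and each `α_t` is injective on its domain. Restricting the
pieces of the decomposition to `A`, i.e. using `A ∩ C_i` with the same group elements `t_i`,
decomposes `A` into pieces whose images tile `φ(A)`.
-/

open Set

namespace SetPartialAction

variable {G X ι : Type*} [Group G]

open Classical in
noncomputable def pieceMap (α : SetPartialAction G X) (t : ι → G) (P : ι → Set X) (x : X) : X :=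
  if h : ∃ i, x ∈ P i then α.act (t h.choose) x else x

variable {α : SetPartialAction G X} {t : ι → G} {P : ι → Set X}

theorem pieceMap_eq_of_mem (hP : Pairwise fun i j => Disjoint (P i) (P j)) {i : ι} {x : X}
    (hx : x ∈ P i) : α.pieceMap t P x = α.act (t i) x := by
  have h : ∃ j, x ∈ P j := ⟨i, hx⟩
  rw [pieceMap, dif_pos h,
    (hP.pairwiseDisjoint univ).elim_set (mem_univ _) (mem_univ _) x h.choose_spec hx]

theorem image_pieceMap (hP : Pairwise fun i j => Disjoint (P i) (P j)) {A : Set X}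
    (hA : A ⊆ ⋃ i, P i) : α.pieceMap t P '' A = ⋃ i, α.act (t i) '' (A ∩ P i) :=
  calc α.pieceMap t P '' A = α.pieceMap t P '' ⋃ i, A ∩ P i := by
        rw [← inter_iUnion, inter_eq_left.2 hA]
    _ = ⋃ i, α.pieceMap t P '' (A ∩ P i) := image_iUnion
    _ = ⋃ i, α.act (t i) '' (A ∩ P i) :=
        iUnion_congr fun _ => image_congr fun _ hx => pieceMap_eq_of_mem hP hx.2

theorem image_iUnion_pieceMap (hP : Pairwise fun i j => Disjoint (P i) (P j)) :
    α.pieceMap t P '' ⋃ i, P i = ⋃ i, α.act (t i) '' P i := by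
  rw [image_pieceMap hP subset_rfl]
  simp only [inter_eq_right.2 (subset_iUnion P _)]

theorem injOn_pieceMap (hdom : ∀ i, P i ⊆ α.dom (t i)⁻¹)
    (hP : Pairwise fun i j => Disjoint (P i) (P j))
    (himg : Pairwise fun i j => Disjoint (α.act (t i) '' P i) (α.act (t j) '' P j)) :
    InjOn (α.pieceMap t P) (⋃ i, P i) := by
  rintro x hx y hy hxy
  obtain ⟨i, hxi⟩ := mem_iUnion.1 hx
  obtain ⟨j, hyj⟩ := mem_iUnion.1 hy
  rw [pieceMap_eq_of_mem hP hxi, pieceMap_eq_of_mem hP hyj] at hxy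
  obtain rfl : i = j := (himg.pairwiseDisjoint univ).elim_set (mem_univ _) (mem_univ _) _
    (mem_image_of_mem _ hxi) (hxy ▸ mem_image_of_mem _ hyj)
  exact (α.bijOn (t i)).injOn (hdom i hxi) (hdom i hyj) hxy

end SetPartialAction

theorem PartialEquidecomp.of_subset_iUnion {G X : Type*} [Group G] {α : SetPartialAction G X}
    {n : ℕ} {t : Fin n → G} {P : Fin n → Set X} (hn : 0 < n) (hdom : ∀ i, P i ⊆ α.dom (t i)⁻¹)
    (hP : Pairwise fun i j => Disjoint (P i) (P j))
    (himg : Pairwise fun i j => Disjoint (α.act (t i) '' P i) (α.act (t j) '' P j))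
    {A : Set X} (hA : A ⊆ ⋃ i, P i) :
    PartialEquidecomp α A (⋃ i, α.act (t i) '' (A ∩ P i)) :=
  ⟨n, t, fun i => A ∩ P i, hn, fun i => inter_subset_right.trans (hdom i),
    fun _ _ hij => (hP hij).mono inter_subset_right inter_subset_right,
    by rw [← inter_iUnion, inter_eq_left.2 hA],
    fun _ _ hij => (himg hij).mono (image_mono inter_subset_right) (image_mono inter_subset_right),
    rfl⟩

/-- If `C ∼_α D`, there is a bijection `φ : C → D` such that `A ∼_α φ(A)` for every
subset `A ⊆ C`. -/
theorem equidecomp_exists_bijection {G X : Type*} [Group G] (α : SetPartialAction G X)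
    {C D : Set X} (hCD : PartialEquidecomp α C D) :
    ∃ φ : X → X, Set.BijOn φ C D ∧ ∀ A ⊆ C, PartialEquidecomp α A (φ '' A) := by
  obtain ⟨n, t, P, hn, hdom, hP, rfl, himg, rfl⟩ := hCD
  refine ⟨α.pieceMap t P, ?_, fun A hA => ?_⟩
  · rw [← α.image_iUnion_pieceMap hP]
    exact (α.injOn_pieceMap hdom hP himg).bijOn_image
  · rw [α.image_pieceMap hP hA]
    exact .of_subset_iUnion hn hdom hP himg hA
end

section
/- If a partial action α satisfies the Reiter condition (P₁), then for every p ≥ 1 it satisfies the Reiter condition (P_p). (Proof via g := f^{1/p} and the inequality |a−b|^p ≤ |a^p − b^p| for a,b ≥ 0.) -/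
open MeasureTheory
open scoped ENNReal

/-- A Borel partial action of a group `G` on a measure space `(X, ν)` with quasi-invariant
measure `ν` and Radon–Nikodym cocycle `σ`: `ν(α_t(E)) = ∫_E σ(·,t) dν` for Borel
`E ⊆ dom t⁻¹`. -/
structure BorelPartialAction (G : Type*) [Group G] (X : Type*) [MeasurableSpace X]
    (ν : Measure X) where
  dom : G → Set X
  act : G → X → X
  σ : X → G → ℝ
  dom_meas : ∀ t : G, MeasurableSet (dom t)
  act_meas : ∀ t : G, Measurable (act t)
  σ_meas : ∀ t : G, Measurable fun x => σ x t
  σ_nonneg : ∀ (x : X) (t : G), 0 ≤ σ x t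
  bijOn : ∀ t : G, Set.BijOn (act t) (dom t⁻¹) (dom t)
  rn : ∀ t : G, ∀ E : Set X, MeasurableSet E → E ⊆ dom t⁻¹ →
    ν (act t '' E) = ∫⁻ x in E, ENNReal.ofReal (σ x t) ∂ν

/-- The Reiter condition `(P_p)` for a partial action. -/
def ReiterP {G X : Type*} [Group G] [TopologicalSpace G] [MeasurableSpace X]
    {ν : Measure X} (α : BorelPartialAction G X ν) (p : ℝ) : Prop :=
  ∀ K : Set G, IsCompact K → ∀ ε : ℝ, 0 < ε →
    ∃ f : X → ℝ, Measurable f ∧ (∀ x, 0 ≤ f x) ∧ (∫ x, f x ^ p ∂ν) = 1 ∧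
      ∀ t ∈ K,
        (∫ x in α.dom t⁻¹, |f x - (α.σ x t) ^ (1 / p) * f (α.act t x)| ^ p ∂ν) < ε

/-!
Given a witness `f ≥ 0` of `(P₁)`, the function `g = f ^ (1/p)` witnesses `(P_p)`: pointwise,
`|g x - σ^(1/p) g (α_t x)|^p ≤ |f x - σ f (α_t x)|` by `|a - b|^p ≤ |a^p - b^p|`, and the right-hand
side is integrable on `dom t⁻¹` because the cocycle turns `∫ σ · (F ∘ α_t)` over `dom t⁻¹` into
`∫ F` over `dom t`.
-/

namespace Real

lemma sub_rpow_le_rpow_sub {a b p : ℝ} (hb : 0 ≤ b) (hba : b ≤ a) (hp : 1 ≤ p) :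
    (a - b) ^ p ≤ a ^ p - b ^ p := by
  have h := add_rpow_le_rpow_add (sub_nonneg.2 hba) hb hp
  rw [sub_add_cancel] at h
  linarith

lemma abs_sub_rpow_le_abs_rpow_sub {a b p : ℝ} (ha : 0 ≤ a) (hb : 0 ≤ b) (hp : 1 ≤ p) :
    |a - b| ^ p ≤ |a ^ p - b ^ p| := by
  wlog hba : b ≤ a generalizing a b
  · rw [abs_sub_comm, abs_sub_comm (a ^ p)]
    exact this hb ha (le_of_not_ge hba)
  rw [abs_of_nonneg (sub_nonneg.2 hba)]
  exact (sub_rpow_le_rpow_sub hb hba hp).trans (le_abs_self _)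

lemma abs_rpow_sub_mul_rpow_rpow_le {a s b p : ℝ} (ha : 0 ≤ a) (hs : 0 ≤ s) (hb : 0 ≤ b)
    (hp : 1 ≤ p) : |a ^ (1 / p) - s ^ (1 / p) * b ^ (1 / p)| ^ p ≤ |a - s * b| := by
  have hp0 : p ≠ 0 := by positivity
  have key := abs_sub_rpow_le_abs_rpow_sub (rpow_nonneg ha p⁻¹)
    (rpow_nonneg (mul_nonneg hs hb) p⁻¹) hp
  rwa [rpow_inv_rpow ha hp0, rpow_inv_rpow (mul_nonneg hs hb) hp0, mul_rpow hs hb,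
    ← one_div] at key

end Real

namespace BorelPartialAction

variable {G X : Type*} [Group G] [MeasurableSpace X] {ν : Measure X}
  (α : BorelPartialAction G X ν)

theorem map_withDensity_σ (t : G) :
    ((ν.restrict (α.dom t⁻¹)).withDensity fun x ↦ ENNReal.ofReal (α.σ x t)).map (α.act t) =
      ν.restrict (α.dom t) := by
  ext A hA
  have hpre : MeasurableSet (α.act t ⁻¹' A) := α.act_meas t hA
  rw [Measure.map_apply (α.act_meas t) hA, withDensity_apply _ hpre,
    Measure.restrict_restrict hpre,
    ← α.rn t _ (hpre.inter (α.dom_meas t⁻¹)) Set.inter_subset_right, Measure.restrict_apply hA,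
    Set.inter_comm, Set.image_inter_preimage, (α.bijOn t).image_eq, Set.inter_comm]

theorem setLIntegral_σ_mul_comp {F : X → ℝ≥0∞} (hF : Measurable F) (t : G) :
    ∫⁻ x in α.dom t⁻¹, ENNReal.ofReal (α.σ x t) * F (α.act t x) ∂ν =
      ∫⁻ y in α.dom t, F y ∂ν := by
  rw [← α.map_withDensity_σ t, lintegral_map hF (α.act_meas t)]
  exact (lintegral_withDensity_eq_lintegral_mul _ (α.σ_meas t).ennreal_ofReal
    (hF.comp (α.act_meas t))).symm

theorem integrableOn_σ_mul_comp {f : X → ℝ} (hf_meas : Measurable f) (hf : Integrable f ν)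
    (t : G) : IntegrableOn (fun x ↦ α.σ x t * f (α.act t x)) (α.dom t⁻¹) ν := by
  refine ⟨((α.σ_meas t).mul (hf_meas.comp (α.act_meas t))).aestronglyMeasurable, ?_⟩
  simp only [HasFiniteIntegral, enorm_mul, Real.enorm_of_nonneg (α.σ_nonneg _ t)]
  rw [α.setLIntegral_σ_mul_comp hf_meas.enorm t]
  exact (setLIntegral_le_lintegral _ _).trans_lt hf.hasFiniteIntegral

end BorelPartialAction

theorem reiterP1_implies_reiterPp_general
    {G X : Type*} [Group G] [TopologicalSpace G] [MeasurableSpace X] {ν : Measure X}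
    (α : BorelPartialAction G X ν) (h : ReiterP α 1) :
    ∀ p : ℝ, 1 ≤ p → ReiterP α p := by
  intro p hp K hK ε hε
  obtain ⟨f, hf_meas, hf_nonneg, hf_one, hf_small⟩ := h K hK ε hε
  simp only [Real.rpow_one, one_div_one] at hf_one hf_small
  have hf_int : Integrable f ν := .of_integral_ne_zero (by simp [hf_one])
  refine ⟨fun x ↦ f x ^ (1 / p), by fun_prop, fun x ↦ Real.rpow_nonneg (hf_nonneg x) _, ?_,
    fun t ht ↦ ?_⟩
  · have hp0 : p ≠ 0 := by positivity
    simpa only [one_div, Real.rpow_inv_rpow (hf_nonneg _) hp0] using hf_one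
  have hF_int : IntegrableOn (fun x ↦ |f x - α.σ x t * f (α.act t x)|) (α.dom t⁻¹) ν :=
    (hf_int.integrableOn.sub (α.integrableOn_σ_mul_comp hf_meas hf_int t)).abs
  calc ∫ x in α.dom t⁻¹, |f x ^ (1 / p) - α.σ x t ^ (1 / p) * f (α.act t x) ^ (1 / p)| ^ p ∂ν
      ≤ ∫ x in α.dom t⁻¹, |f x - α.σ x t * f (α.act t x)| ∂ν :=
        integral_mono_of_nonneg (ae_of_all _ fun _ ↦ by positivity) hF_int <| ae_of_all _ fun x ↦
          Real.abs_rpow_sub_mul_rpow_rpow_le (hf_nonneg x) (α.σ_nonneg x t) (hf_nonneg _) hp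
    _ < ε := hf_small t ht

/-- If a partial action satisfies the Reiter condition `(P₁)`, then it satisfies the
Reiter condition `(P_p)` for every `p ≥ 1`. -/
theorem reiterP1_implies_reiterPp
    {G X : Type*} [Group G] [TopologicalSpace G] [IsTopologicalGroup G]
    [LocallyCompactSpace G] [MeasurableSpace X] {ν : Measure X}
    (α : BorelPartialAction G X ν) (h : ReiterP α 1) :
    ∀ p : ℝ, 1 ≤ p → ReiterP α p :=
  reiterP1_implies_reiterPp_general α h
end

section
/- Let π be a partial representation of a group G on a Banach space E (π_t π_s π_{s⁻¹} = π_{ts} π_{s⁻¹} and π_{t⁻¹} π_t π_s = π_{t⁻¹} π_{ts}, π_e = id, each π_t a partial isometry). Define X := E, X_t := Im(π_t π_{t⁻¹}), and (α_π)_t : X_{t⁻¹} → X_t the restriction of π_t. Then α_π is a partial action of G on E: (α_π)_e = id, (α_π)_{t⁻¹} = (α_π)_t⁻¹, and (α_π)_{st} extends (α_π)_s∘(α_π)_t. -/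
/-- The range of the idempotent `π_t π_{t⁻¹}` associated to a partial representation. -/
def pdom {G E : Type*} [Group G] [NormedAddCommGroup E] [NormedSpace ℂ E]
    (π : G → E →L[ℂ] E) (t : G) : Set E :=
  Set.range (⇑((π t).comp (π t⁻¹)))

/-- A partial representation `π` of `G` on a Banach space `E` (by partial isometries,
with `π_e = id`, `π_t π_s π_{s⁻¹} = π_{ts} π_{s⁻¹}` and `π_{t⁻¹} π_t π_s = π_{t⁻¹} π_{ts}`)
gives rise to a partial action `α_π` of `G` on `E` with domains
`X_t = Im(π_t π_{t⁻¹})` and `(α_π)_t` the restriction of `π_t`. -/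
theorem partial_representation_gives_partial_action
    {G E : Type*} [Group G] [NormedAddCommGroup E] [NormedSpace ℂ E] [CompleteSpace E]
    (π : G → E →L[ℂ] E)
    (hone : π 1 = ContinuousLinearMap.id ℂ E)
    (hpiso : ∀ t : G, ∃ S : E →L[ℂ] E, ‖π t‖ ≤ 1 ∧ ‖S‖ ≤ 1 ∧
      S.comp ((π t).comp S) = S ∧ (π t).comp (S.comp (π t)) = π t)
    (hrel1 : ∀ s t : G, (π t).comp ((π s).comp (π s⁻¹)) = (π (t * s)).comp (π s⁻¹))
    (hrel2 : ∀ s t : G, (π t⁻¹).comp ((π t).comp (π s)) = (π t⁻¹).comp (π (t * s))) :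
    (pdom π 1 = Set.univ) ∧
    (∀ x : E, π 1 x = x) ∧
    (∀ t : G, Set.BijOn (π t) (pdom π t⁻¹) (pdom π t)) ∧
    (∀ t : G, ∀ x ∈ pdom π t⁻¹, π t⁻¹ (π t x) = x) ∧
    (∀ s t : G, ∀ x ∈ pdom π t⁻¹, π t x ∈ pdom π s⁻¹ →
      x ∈ pdom π (s * t)⁻¹ ∧ π (s * t) x = π s (π t x)) := by

  have hA : ∀ t : G, ∀ x : E, π t (π t⁻¹ (π t x)) = π t x := by
    intro t x
    have h := hrel1 t⁻¹ t
    rw [inv_inv, mul_inv_cancel, hone] at h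
    have h1 := DFunLike.congr_fun h x
    simpa using h1
  have hmem : ∀ t : G, ∀ x : E, x ∈ pdom π t ↔ π t (π t⁻¹ x) = x := by
    intro t x
    constructor
    · rintro ⟨y, rfl⟩
      simpa using hA t (π t⁻¹ y)
    · intro h
      exact ⟨x, by simpa using h⟩
  have hmem' : ∀ t : G, ∀ x : E, x ∈ pdom π t⁻¹ ↔ π t⁻¹ (π t x) = x := by
    intro t x
    rw [hmem, inv_inv]
  refine ⟨?_, ?_, ?_, ?_, ?_⟩
  · ext x
    simp [hmem, hone, inv_one]
  · intro x
    simp [hone]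
  · intro t
    refine ⟨?_, ?_, ?_⟩
    · intro x hx
      rw [hmem]
      rw [(hmem' t x).mp hx]
    · intro x hx y hy hxy
      rw [hmem'] at hx hy
      rw [← hx, ← hy, hxy]
    · intro y hy
      rw [hmem] at hy
      refine ⟨π t⁻¹ y, ?_, hy⟩
      rw [hmem', hy]
  · intro t x hx
    exact (hmem' t x).mp hx
  · intro s t x hx hy
    rw [hmem'] at hx
    rw [hmem, inv_inv] at hy
    have hst : π s (π t x) = π (s * t) x := by
      have h1 := DFunLike.congr_fun (hrel1 t s) (π t x)
      simp only [ContinuousLinearMap.comp_apply] at h1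
      rw [hx] at h1
      exact h1
    refine ⟨?_, hst.symm⟩
    rw [hmem']
    have h2 := DFunLike.congr_fun (hrel1 s⁻¹ t⁻¹) (π t x)
    simp only [ContinuousLinearMap.comp_apply, inv_inv] at h2
    rw [hy, hx, hst] at h2
    rw [← mul_inv_rev] at h2
    exact h2.symm
end

section
/- Let π be a partial representation of a locally compact group G on a Hilbert space E. Then the trivial representation 1_G is weakly contained in π if and only if for each ε > 0 and each compact K ⊆ G there is a unit vector ξ ∈ E with sup_{t∈K} ‖π_t ξ − ξ‖ < ε. -/
set_option maxHeartbeats 2000000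

open MeasureTheory Set
open scoped Pointwise

/-- The trivial representation is weakly contained in a partial representation `π` of a
locally compact group `G` on a Hilbert space `E` if and only if `π` has almost invariant
unit vectors: for every `ε > 0` and compact `K ⊆ G` there is a unit vector `ξ` with
`sup_{t ∈ K} ‖π_t ξ − ξ‖ < ε`. -/
theorem trivial_weakly_contained_iff_almost_invariant_vectors
    {G E : Type*} [Group G] [TopologicalSpace G] [IsTopologicalGroup G]
    [LocallyCompactSpace G]
    [NormedAddCommGroup E] [InnerProductSpace ℂ E] [CompleteSpace E]
    (π : G → E →L[ℂ] E)
    (hcont : ∀ ξ : E, Continuous fun t : G => π t ξ)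
    (hone : π 1 = ContinuousLinearMap.id ℂ E)
    (hpiso : ∀ t : G, ∃ S : E →L[ℂ] E, ‖π t‖ ≤ 1 ∧ ‖S‖ ≤ 1 ∧
      S.comp ((π t).comp S) = S ∧ (π t).comp (S.comp (π t)) = π t)
    (hrel1 : ∀ s t : G, (π t).comp ((π s).comp (π s⁻¹)) = (π (t * s)).comp (π s⁻¹))
    (hrel2 : ∀ s t : G, (π t⁻¹).comp ((π t).comp (π s)) = (π t⁻¹).comp (π (t * s))) :
    (∀ ε : ℝ, 0 < ε → ∀ K : Set G, IsCompact K →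
        ∃ (n : ℕ) (η : Fin n → E), ∀ t ∈ K,
          ‖(1 : ℂ) - ∑ i, (inner ℂ (π t (η i)) (η i) : ℂ)‖ < ε)
      ↔
    (∀ ε : ℝ, 0 < ε → ∀ K : Set G, IsCompact K →
        ∃ ξ : E, ‖ξ‖ = 1 ∧ ∀ t ∈ K, ‖π t ξ - ξ‖ < ε) := by
  have hcontr : ∀ (t : G) (x : E), ‖π t x‖ ≤ ‖x‖ := by
    intro t x
    obtain ⟨S, hS1, -, -, -⟩ := hpiso t
    simpa using ContinuousLinearMap.le_of_opNorm_le (π t) hS1 x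
  constructor
  · -- hard direction
    intro hL ε hε K hK
    by_contra hcon
    push_neg at hcon
    classical
    borelize G
    obtain ⟨C, hCcomp, hCnhds⟩ := exists_compact_mem_nhds (1 : G)
    -- the symmetric open neighborhood U and auxiliary compact sets
    set U : Set G := interior C ∩ (interior C)⁻¹ with hUdef
    have hUo : IsOpen U := isOpen_interior.inter isOpen_interior.inv
    have hU1 : (1 : G) ∈ U := by
      constructor
      · exact mem_interior_iff_mem_nhds.2 hCnhds
      · rw [Set.mem_inv, inv_one]; exact mem_interior_iff_mem_nhds.2 hCnhds
    have hUsymm : ∀ u : G, u ∈ U → u⁻¹ ∈ U := by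
      intro u hu
      exact ⟨hu.2, by rw [Set.mem_inv, inv_inv]; exact hu.1⟩
    have hUC : U ⊆ C := fun u hu => interior_subset hu.1
    set D : Set G := closure (C ∪ C⁻¹) with hDdef
    have hDcomp : IsCompact D := (hCcomp.union hCcomp.inv).closure
    have hUD : U ⊆ D := fun u hu => subset_closure (Or.inl (hUC hu))
    have hUclcomp : IsCompact (closure U) :=
      hDcomp.of_isClosed_subset isClosed_closure (closure_mono hUD |>.trans (by
        rw [hDdef, closure_closure]))
    set M : Set G := closure (K * D) with hMdef
    have hMcomp : IsCompact M := (hK.mul hDcomp).closure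
    set K₂ : Set G := M ∪ (closure U ∪ {1}) with hK₂def
    have hK₂comp : IsCompact K₂ :=
      hMcomp.union (hUclcomp.union isCompact_singleton)
    have h1K₂ : (1 : G) ∈ K₂ := Or.inr (Or.inr rfl)
    have hUK₂ : ∀ u : G, u ∈ U → u ∈ K₂ := fun u hu => Or.inr (Or.inl (subset_closure hu))
    have hMK₂ : M ⊆ K₂ := subset_union_left
    -- Haar measure and the constants
    set μ : Measure G := Measure.haar with hμdef
    set a : ℝ := (μ U).toReal with hadef
    set b : ℝ := (μ M).toReal with hbdef
    have hμU_ne_zero : μ U ≠ 0 := IsOpen.measure_ne_zero μ hUo ⟨1, hU1⟩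
    have hμU_lt_top : μ U < ⊤ :=
      lt_of_le_of_lt (measure_mono (hUD.trans subset_closure)) hDcomp.closure.measure_lt_top
    have ha : 0 < a := ENNReal.toReal_pos hμU_ne_zero hμU_lt_top.ne
    have hb0 : 0 ≤ b := ENNReal.toReal_nonneg
    -- choice of δ
    set δ : ℝ := min (1/2) (ε^2 * a / (16*b + 160*a + 1)) with hδdef
    have hden : (0:ℝ) < 16*b + 160*a + 1 := by nlinarith
    have hδpos : 0 < δ := by
      apply lt_min (by norm_num)
      exact div_pos (mul_pos (pow_pos hε 2) ha) hden
    have hδhalf : δ ≤ 1/2 := min_le_left _ _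
    have hδle : δ * (16*b + 160*a + 1) ≤ ε^2 * a := by
      rw [← le_div_iff₀ hden]
      exact min_le_right _ _
    clear_value a b δ
    -- apply the weak containment hypothesis
    obtain ⟨n, η, hη⟩ := hL δ hδpos K₂ hK₂comp
    set S : ℝ := ∑ i, ‖η i‖^2 with hSdef
    clear_value S
    have hS : |1 - S| < δ := by
      have h := hη 1 h1K₂
      have e1 : (∑ i, (inner ℂ (π 1 (η i)) (η i) : ℂ)) = ((S : ℝ) : ℂ) := by
        rw [hSdef]
        push_cast
        refine Finset.sum_congr rfl fun i _ => ?_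
        rw [hone]
        simp [inner_self_eq_norm_sq_to_K]
      rw [e1] at h
      have e2 : (1 : ℂ) - ((S:ℝ):ℂ) = (((1 - S : ℝ)):ℂ) := by push_cast; ring
      rw [e2, Complex.norm_real] at h
      exact h
    have hSlb : 1 - δ < S := by
      have := abs_lt.1 hS; linarith [this.2]
    have hSub : S < 1 + δ := by
      have := abs_lt.1 hS; linarith [this.1]
    have hShalf : 1/2 ≤ S := by linarith
    -- uniform bound on sums of squared displacements over K₂
    have hsum : ∀ t ∈ K₂, (∑ i, ‖π t (η i) - η i‖^2) ≤ 4*δ := by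
      intro t ht
      have hre : 1 - δ ≤ RCLike.re (∑ i, (inner ℂ (π t (η i)) (η i) : ℂ)) := by
        have h := hη t ht
        have h2 : RCLike.re ((1:ℂ) - ∑ i, (inner ℂ (π t (η i)) (η i) : ℂ)) ≤
            ‖(1:ℂ) - ∑ i, (inner ℂ (π t (η i)) (η i) : ℂ)‖ := RCLike.re_le_norm _
        rw [map_sub] at h2
        simp only [RCLike.one_re] at h2
        linarith
      have e1 : ∀ i : Fin n, ‖π t (η i) - η i‖^2 ≤
          2*‖η i‖^2 - 2 * RCLike.re (inner ℂ (π t (η i)) (η i) : ℂ) := by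
        intro i
        have hns := norm_sub_sq (𝕜 := ℂ) (π t (η i)) (η i)
        have hc : ‖π t (η i)‖^2 ≤ ‖η i‖^2 :=
          pow_le_pow_left₀ (norm_nonneg _) (hcontr t (η i)) 2
        nlinarith [hns, hc]
      calc (∑ i, ‖π t (η i) - η i‖^2)
          ≤ ∑ i, (2*‖η i‖^2 - 2 * RCLike.re (inner ℂ (π t (η i)) (η i) : ℂ)) :=
            Finset.sum_le_sum fun i _ => e1 i
        _ = 2*S - 2 * RCLike.re (∑ i, (inner ℂ (π t (η i)) (η i) : ℂ)) := by
            rw [map_sum, Finset.sum_sub_distrib, ← Finset.mul_sum, ← Finset.mul_sum, hSdef]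
        _ ≤ 2*(1+δ) - 2*(1-δ) := by linarith
        _ = 4*δ := by ring
    -- bad points
    have hbad : ∀ i : Fin n, η i ≠ 0 → ∃ t ∈ K, ε * ‖η i‖ ≤ ‖π t (η i) - η i‖ := by
      intro i hi
      set ξ : E := ((‖η i‖ : ℂ))⁻¹ • η i with hξdef
      have hnm : ‖η i‖ ≠ 0 := norm_ne_zero_iff.2 hi
      have hξ1 : ‖ξ‖ = 1 := by
        rw [hξdef, norm_smul, norm_inv, Complex.norm_real, Real.norm_eq_abs,
          abs_of_nonneg (norm_nonneg _)]
        field_simp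
      obtain ⟨t, htK, hle⟩ := hcon ξ hξ1
      refine ⟨t, htK, ?_⟩
      have e1 : π t ξ - ξ = ((‖η i‖ : ℂ))⁻¹ • (π t (η i) - η i) := by
        rw [hξdef, ContinuousLinearMap.map_smul, smul_sub]
      have e2 : ‖π t ξ - ξ‖ = ‖η i‖⁻¹ * ‖π t (η i) - η i‖ := by
        rw [e1, norm_smul, norm_inv, Complex.norm_real, Real.norm_eq_abs,
          abs_of_nonneg (norm_nonneg _)]
      rw [e2] at hle
      have hpos : 0 < ‖η i‖ := lt_of_le_of_ne (norm_nonneg _) (Ne.symm hnm)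
      calc ε * ‖η i‖ ≤ (‖η i‖⁻¹ * ‖π t (η i) - η i‖) * ‖η i‖ :=
            mul_le_mul_of_nonneg_right hle (norm_nonneg _)
        _ = ‖π t (η i) - η i‖ := by field_simp
    have hexists0 : ∃ i : Fin n, η i ≠ 0 := by
      by_contra hno
      push_neg at hno
      have : S = 0 := by
        rw [hSdef]
        exact Finset.sum_eq_zero fun i _ => by rw [hno i]; simp
      linarith
    obtain ⟨i₀, hi₀⟩ := hexists0
    obtain ⟨t₀, ht₀K, -⟩ := hbad i₀ hi₀
    have hτ : ∀ i : Fin n, ∃ t ∈ K, ε * ‖η i‖ ≤ ‖π t (η i) - η i‖ := by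
      intro i
      by_cases hi : η i = 0
      · exact ⟨t₀, ht₀K, by simp [hi]⟩
      · exact hbad i hi
    choose τ hτK hτle using hτ
    -- the three-term displacement inequality (uses the partial representation relation)
    have hmove : ∀ (i : Fin n) (u : G),
        ‖π (τ i) (η i) - η i‖ ≤ ‖π (τ i * u) (η i) - η i‖ +
          ‖π u (η i) - η i‖ + 2 * ‖π u⁻¹ (η i) - η i‖ := by
      intro i u
      set x := η i
      have hre : π (τ i) ((π u) ((π u⁻¹) x)) = π (τ i * u) ((π u⁻¹) x) := by
        have h := congrArg (fun T : E →L[ℂ] E => T x) (hrel1 u (τ i))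
        simpa using h
      have t1 : ‖π (τ i) x - x‖ ≤
          ‖π (τ i) x - π (τ i) ((π u) ((π u⁻¹) x))‖ +
          ‖π (τ i) ((π u) ((π u⁻¹) x)) - x‖ := norm_sub_le_norm_sub_add_norm_sub _ _ _
      have t2 : ‖π (τ i) x - π (τ i) ((π u) ((π u⁻¹) x))‖ ≤
          ‖π u x - x‖ + ‖π u⁻¹ x - x‖ := by
        have e : π (τ i) x - π (τ i) ((π u) ((π u⁻¹) x)) =
            π (τ i) (x - (π u) ((π u⁻¹) x)) := by rw [map_sub]
        rw [e]
        refine (hcontr _ _).trans ?_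
        have t3 : ‖x - (π u) ((π u⁻¹) x)‖ ≤
            ‖x - π u x‖ + ‖π u x - (π u) ((π u⁻¹) x)‖ :=
          norm_sub_le_norm_sub_add_norm_sub _ _ _
        have t4 : ‖π u x - (π u) ((π u⁻¹) x)‖ ≤ ‖x - π u⁻¹ x‖ := by
          have e2 : π u x - (π u) ((π u⁻¹) x) = π u (x - π u⁻¹ x) := by rw [map_sub]
          rw [e2]; exact hcontr _ _
        have := norm_sub_rev x (π u x)
        have := norm_sub_rev x (π u⁻¹ x)
        calc ‖x - (π u) ((π u⁻¹) x)‖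
            ≤ ‖x - π u x‖ + ‖π u x - (π u) ((π u⁻¹) x)‖ := t3
          _ ≤ ‖π u x - x‖ + ‖π u⁻¹ x - x‖ := by
              rw [norm_sub_rev]
              gcongr
              rw [← norm_sub_rev x]
              exact t4
      have t5 : ‖π (τ i) ((π u) ((π u⁻¹) x)) - x‖ ≤
          ‖π u⁻¹ x - x‖ + ‖π (τ i * u) x - x‖ := by
        rw [hre]
        have t6 : ‖π (τ i * u) ((π u⁻¹) x) - x‖ ≤
            ‖π (τ i * u) ((π u⁻¹) x) - π (τ i * u) x‖ + ‖π (τ i * u) x - x‖ :=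
          norm_sub_le_norm_sub_add_norm_sub _ _ _
        have t7 : ‖π (τ i * u) ((π u⁻¹) x) - π (τ i * u) x‖ ≤ ‖π u⁻¹ x - x‖ := by
          have e3 : π (τ i * u) ((π u⁻¹) x) - π (τ i * u) x = π (τ i * u) (π u⁻¹ x - x) := by
            rw [map_sub]
          rw [e3]; exact hcontr _ _
        linarith
      linarith
    -- pointwise quadratic inequality
    have hpt : ∀ (i : Fin n) (u : G),
        ε^2 * ‖η i‖^2 ≤ 2*‖π (τ i * u) (η i) - η i‖^2 +
          4*‖π u (η i) - η i‖^2 + 16*‖π u⁻¹ (η i) - η i‖^2 := by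
      intro i u
      set A := ‖π (τ i * u) (η i) - η i‖
      set B := ‖π u (η i) - η i‖
      set Cc := ‖π u⁻¹ (η i) - η i‖
      have h1 : ε * ‖η i‖ ≤ A + B + 2*Cc := (hτle i).trans (hmove i u)
      have h0 : 0 ≤ ε * ‖η i‖ := mul_nonneg hε.le (norm_nonneg _)
      have hsq : (ε * ‖η i‖)^2 ≤ (A + B + 2*Cc)^2 := pow_le_pow_left₀ h0 h1 2
      nlinarith [sq_nonneg (A - 2*B), sq_nonneg (A - 4*Cc), sq_nonneg (B - 2*Cc)]
    -- continuity and integrability facts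
    have hg1cont : ∀ i : Fin n, Continuous fun x : G => ‖π x (η i) - η i‖^2 := by
      intro i
      exact (((hcont (η i)).sub continuous_const).norm).pow 2
    have hUmeas : MeasurableSet U := hUo.measurableSet
    have hMmeas : MeasurableSet M := isClosed_closure.measurableSet
    have hintM : ∀ i : Fin n, IntegrableOn (fun x : G => ‖π x (η i) - η i‖^2) M μ := by
      intro i
      exact (hg1cont i).continuousOn.integrableOn_compact' hMcomp hMmeas
    have hintU : ∀ i : Fin n, IntegrableOn (fun x : G => ‖π x (η i) - η i‖^2) U μ := by
      intro i
      exact (((hg1cont i).continuousOn.integrableOn_compact' hUclcomp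
        isClosed_closure.measurableSet).mono_set subset_closure)
    have hintUinv : ∀ i : Fin n, IntegrableOn (fun u : G => ‖π u⁻¹ (η i) - η i‖^2) U μ := by
      intro i
      exact ((((hg1cont i).comp continuous_inv).continuousOn.integrableOn_compact' hUclcomp
        isClosed_closure.measurableSet).mono_set subset_closure)
    have hintUtrans : ∀ i : Fin n,
        IntegrableOn (fun u : G => ‖π (τ i * u) (η i) - η i‖^2) U μ := by
      intro i
      exact ((((hg1cont i).comp (continuous_const.mul continuous_id)).continuousOn.integrableOn_compact'
        hUclcomp isClosed_closure.measurableSet).mono_set subset_closure)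
    -- change of variables bound
    have hJ : ∀ i : Fin n,
        (∫ u in U, ‖π (τ i * u) (η i) - η i‖^2 ∂μ) ≤
          ∫ x in M, ‖π x (η i) - η i‖^2 ∂μ := by
      intro i
      set g : G → ℝ := fun x => ‖π x (η i) - η i‖^2 with hg
      set V : Set G := (fun x => τ i * x) '' U with hV
      have hVmeas : MeasurableSet V := (isOpenMap_mul_left (τ i) U hUo).measurableSet
      have hVM : V ⊆ M := by
        rintro _ ⟨u, hu, rfl⟩
        exact subset_closure (Set.mul_mem_mul (hτK i) (hUD hu))
      have key : ∀ u : G, V.indicator g (τ i * u) = U.indicator (fun u => g (τ i * u)) u := by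
        intro u
        by_cases hu : u ∈ U
        · rw [Set.indicator_of_mem hu, Set.indicator_of_mem (Set.mem_image_of_mem _ hu)]
        · rw [Set.indicator_of_notMem hu, Set.indicator_of_notMem]
          rw [(mul_right_injective (τ i)).mem_set_image]
          exact hu
      calc (∫ u in U, g (τ i * u) ∂μ)
          = ∫ u, U.indicator (fun u => g (τ i * u)) u ∂μ := (integral_indicator hUmeas).symm
        _ = ∫ u, V.indicator g (τ i * u) ∂μ := by
            refine integral_congr_ae (Filter.Eventually.of_forall fun u => (key u).symm)
        _ = ∫ x, V.indicator g x ∂μ := integral_mul_left_eq_self (V.indicator g) (τ i)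
        _ = ∫ x in V, g x ∂μ := integral_indicator hVmeas
        _ ≤ ∫ x in M, g x ∂μ := by
            refine setIntegral_mono_set (hintM i) ?_ (HasSubset.Subset.eventuallyLE hVM)
            exact Filter.Eventually.of_forall fun x => by positivity
    -- per-index integral inequality
    have hper : ∀ i : Fin n,
        ε^2 * ‖η i‖^2 * a ≤ 2*(∫ x in M, ‖π x (η i) - η i‖^2 ∂μ) +
          4*(∫ u in U, ‖π u (η i) - η i‖^2 ∂μ) +
          16*(∫ u in U, ‖π u⁻¹ (η i) - η i‖^2 ∂μ) := by
      intro i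
      have hconst : (∫ _ in U, (ε^2 * ‖η i‖^2) ∂μ) = ε^2 * ‖η i‖^2 * a := by
        rw [setIntegral_const, smul_eq_mul, Measure.real, hadef]; ring
      have i1 : IntegrableOn (fun u : G => 2*‖π (τ i * u) (η i) - η i‖^2) U μ :=
        (hintUtrans i).const_mul 2
      have i2 : IntegrableOn (fun u : G => 4*‖π u (η i) - η i‖^2) U μ :=
        (hintU i).const_mul 4
      have i3 : IntegrableOn (fun u : G => 16*‖π u⁻¹ (η i) - η i‖^2) U μ :=
        (hintUinv i).const_mul 16
      have i12 : IntegrableOn (fun u : G =>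
          2*‖π (τ i * u) (η i) - η i‖^2 + 4*‖π u (η i) - η i‖^2) U μ := i1.add i2
      have hrhsint : IntegrableOn (fun u : G =>
          2*‖π (τ i * u) (η i) - η i‖^2 + 4*‖π u (η i) - η i‖^2 +
            16*‖π u⁻¹ (η i) - η i‖^2) U μ := i12.add i3
      have hmono : (∫ _ in U, (ε^2 * ‖η i‖^2) ∂μ) ≤
          ∫ u in U, (2*‖π (τ i * u) (η i) - η i‖^2 + 4*‖π u (η i) - η i‖^2 +
            16*‖π u⁻¹ (η i) - η i‖^2) ∂μ := by
        refine setIntegral_mono_on (integrableOn_const hμU_lt_top.ne) hrhsint hUmeas ?_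
        intro u _
        exact hpt i u
      have hsplit : (∫ u in U, (2*‖π (τ i * u) (η i) - η i‖^2 + 4*‖π u (η i) - η i‖^2 +
            16*‖π u⁻¹ (η i) - η i‖^2) ∂μ) =
          2*(∫ u in U, ‖π (τ i * u) (η i) - η i‖^2 ∂μ) +
          4*(∫ u in U, ‖π u (η i) - η i‖^2 ∂μ) +
          16*(∫ u in U, ‖π u⁻¹ (η i) - η i‖^2 ∂μ) := by
        rw [integral_add i12 i3, integral_add i1 i2,
          integral_const_mul, integral_const_mul, integral_const_mul]
      have := hJ i
      rw [hconst] at hmono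
      rw [hsplit] at hmono
      linarith
    -- summing over i
    have hsumJ : (∑ i, ∫ x in M, ‖π x (η i) - η i‖^2 ∂μ) ≤ 4*δ*b := by
      rw [← integral_finset_sum _ (fun i _ => hintM i)]
      have : (∫ x in M, (∑ i, ‖π x (η i) - η i‖^2) ∂μ) ≤ ∫ _ in M, (4*δ) ∂μ := by
        refine setIntegral_mono_on (integrable_finset_sum _ (fun i _ => hintM i)) 
          (integrableOn_const hMcomp.measure_lt_top.ne) hMmeas ?_
        intro x hx
        exact hsum x (hMK₂ hx)
      rw [setIntegral_const, smul_eq_mul] at this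
      calc (∫ x in M, (∑ i, ‖π x (η i) - η i‖^2) ∂μ) ≤ (μ M).toReal * (4*δ) := this
        _ = 4*δ*b := by rw [hbdef]; ring
    have hsumU : (∑ i, ∫ u in U, ‖π u (η i) - η i‖^2 ∂μ) ≤ 4*δ*a := by
      rw [← integral_finset_sum _ (fun i _ => hintU i)]
      have : (∫ u in U, (∑ i, ‖π u (η i) - η i‖^2) ∂μ) ≤ ∫ _ in U, (4*δ) ∂μ := by
        refine setIntegral_mono_on (integrable_finset_sum _ (fun i _ => hintU i))
          (integrableOn_const hμU_lt_top.ne) hUmeas ?_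
        intro u hu
        exact hsum u (hUK₂ u hu)
      rw [setIntegral_const, smul_eq_mul] at this
      calc (∫ u in U, (∑ i, ‖π u (η i) - η i‖^2) ∂μ) ≤ (μ U).toReal * (4*δ) := this
        _ = 4*δ*a := by rw [hadef]; ring
    have hsumUinv : (∑ i, ∫ u in U, ‖π u⁻¹ (η i) - η i‖^2 ∂μ) ≤ 4*δ*a := by
      rw [← integral_finset_sum _ (fun i _ => hintUinv i)]
      have : (∫ u in U, (∑ i, ‖π u⁻¹ (η i) - η i‖^2) ∂μ) ≤ ∫ _ in U, (4*δ) ∂μ := by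
        refine setIntegral_mono_on (integrable_finset_sum _ (fun i _ => hintUinv i))
          (integrableOn_const hμU_lt_top.ne) hUmeas ?_
        intro u hu
        exact hsum u⁻¹ (hUK₂ u⁻¹ (hUsymm u hu))
      rw [setIntegral_const, smul_eq_mul] at this
      calc (∫ u in U, (∑ i, ‖π u⁻¹ (η i) - η i‖^2) ∂μ) ≤ (μ U).toReal * (4*δ) := this
        _ = 4*δ*a := by rw [hadef]; ring
    have htotal : ε^2 * S * a ≤ 8*δ*b + 80*δ*a := by
      have h1 : (∑ i, ε^2 * ‖η i‖^2 * a) = ε^2 * S * a := by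
        rw [hSdef, Finset.mul_sum, Finset.sum_mul]
      have h2 : (∑ i, ε^2 * ‖η i‖^2 * a) ≤
          ∑ i, (2*(∫ x in M, ‖π x (η i) - η i‖^2 ∂μ) +
          4*(∫ u in U, ‖π u (η i) - η i‖^2 ∂μ) +
          16*(∫ u in U, ‖π u⁻¹ (η i) - η i‖^2 ∂μ)) :=
        Finset.sum_le_sum fun i _ => hper i
      rw [h1] at h2
      have h3 : (∑ i, (2*(∫ x in M, ‖π x (η i) - η i‖^2 ∂μ) +
          4*(∫ u in U, ‖π u (η i) - η i‖^2 ∂μ) +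
          16*(∫ u in U, ‖π u⁻¹ (η i) - η i‖^2 ∂μ))) =
          2*(∑ i, ∫ x in M, ‖π x (η i) - η i‖^2 ∂μ) +
          4*(∑ i, ∫ u in U, ‖π u (η i) - η i‖^2 ∂μ) +
          16*(∑ i, ∫ u in U, ‖π u⁻¹ (η i) - η i‖^2 ∂μ) := by
        rw [Finset.sum_add_distrib, Finset.sum_add_distrib, ← Finset.mul_sum, ← Finset.mul_sum,
          ← Finset.mul_sum]
      rw [h3] at h2
      linarith
    -- final contradiction
    have hfin1 : ε^2 * (1/2) * a ≤ ε^2 * S * a := by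
      have h := mul_le_mul_of_nonneg_left hShalf (by positivity : (0:ℝ) ≤ ε^2*a)
      calc ε^2*(1/2)*a = ε^2*a*(1/2) := by ring
        _ ≤ ε^2*a*S := h
        _ = ε^2*S*a := by ring
    have key : ε^2*(1/2)*a ≤ 8*δ*b + 80*δ*a := le_trans hfin1 htotal
    have hX : δ ≤ 0 := by nlinarith [key, hδle]
    exact absurd hX (not_le.2 hδpos)
  · -- easy direction
    intro hR ε hε K hK
    obtain ⟨ξ, hξ1, hinv⟩ := hR ε hε K hK
    refine ⟨1, fun _ => ξ, fun t ht => ?_⟩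
    have h1 : (∑ i : Fin 1, (inner ℂ (π t ξ) ξ : ℂ)) = inner ℂ (π t ξ) ξ := Fin.sum_univ_one _
    rw [h1]
    have hξξ : (1:ℂ) = (inner ℂ ξ ξ : ℂ) := by
      rw [inner_self_eq_norm_sq_to_K, hξ1]; norm_num
    rw [hξξ, ← inner_sub_left]
    calc ‖(inner ℂ (ξ - π t ξ) ξ : ℂ)‖ ≤ ‖ξ - π t ξ‖ * ‖ξ‖ := norm_inner_le_norm _ _
      _ = ‖π t ξ - ξ‖ := by rw [hξ1, mul_one, norm_sub_rev]
      _ < ε := hinv t ht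
end
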